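/- arXiv:1812.05969 — 3 statements merged into one kernel-verified Lean document; each statement's English description precedes it below -/
import Mathlib

section
/- Let T be an invertible matrix on a finite index set and let Λ = Λ₁ ⊔ Λ₂ be a disjoint decomposition. If T_{Λ₁} and T_{Λ₂} (the restrictions of T to the blocks Λ₁ and Λ₂) are invertible, then the resolvent identity holds: T_Λ⁻¹ = (T_{Λ₁}⁻¹ + T_{Λ₂}⁻¹) − (T_{Λ₁}⁻¹ + T_{Λ₂}⁻¹)(T − T_{Λ₁} − T_{Λ₂}) T_Λ⁻¹, where T_{Λᵢ}⁻¹ is extended by zero outside its block. -/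
/-!
Transported along `Λ ≃ Λ₁ ⊕ Λ₂`, `R₁ + R₂` and `E₁ + E₂` are the block-diagonal matrices
`fromBlocks T₁ 0 0 T₂` and `fromBlocks T₁⁻¹ 0 0 T₂⁻¹`, so `(E₁ + E₂)(R₁ + R₂) = 1`. The identity is then
pure ring algebra: `E (T - R) T⁻¹ = E - E R T⁻¹ = E - T⁻¹`.
-/

open Matrix

theorem eq_sub_mul_sub_mul_of_mul_eq_one {α : Type*} [Ring α] {E R T S : α}
    (hER : E * R = 1) (hTS : T * S = 1) : S = E - E * (T - R) * S := by
  have : E * (T - R) * S = E - S := by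
    rw [mul_sub, sub_mul, mul_assoc, hTS, mul_one, hER, one_mul]
  rw [this, sub_sub_cancel]

namespace Matrix

variable {Λ α : Type*} (p : Λ → Prop) [DecidablePred p]

def extendByZero [Zero α] (A : Matrix {m // p m} {m // p m} α) : Matrix Λ Λ α :=
  of fun m m' => if h : p m then (if h' : p m' then A ⟨m, h⟩ ⟨m', h'⟩ else 0) else 0

theorem extendByZero_add_extendByZero_not [AddZeroClass α]
    (A : Matrix {m // p m} {m // p m} α) (B : Matrix {m // ¬ p m} {m // ¬ p m} α) :
    extendByZero p A + extendByZero (fun m => ¬ p m) B =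
      (fromBlocks A 0 0 B).submatrix (Equiv.sumCompl p).symm (Equiv.sumCompl p).symm := by
  ext m m'
  by_cases h : p m <;> by_cases h' : p m' <;> simp [extendByZero, h, h',
    Equiv.sumCompl_symm_apply_of_pos, Equiv.sumCompl_symm_apply_of_neg]

theorem extendByZero_inv_add_extendByZero_not_inv_mul [Fintype Λ] [DecidableEq Λ] [CommRing α]
    (A : Matrix {m // p m} {m // p m} α) (B : Matrix {m // ¬ p m} {m // ¬ p m} α)
    (hA : IsUnit A.det) (hB : IsUnit B.det) :
    (extendByZero p A⁻¹ + extendByZero (fun m => ¬ p m) B⁻¹) *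
      (extendByZero p A + extendByZero (fun m => ¬ p m) B) = 1 := by
  rw [extendByZero_add_extendByZero_not, extendByZero_add_extendByZero_not, submatrix_mul_equiv,
    fromBlocks_multiply, nonsing_inv_mul A hA, nonsing_inv_mul B hB]
  simp

end Matrix

theorem resolvent_identity_general {Λ : Type*} [Fintype Λ] [DecidableEq Λ]
    (T : Matrix Λ Λ ℂ) (p : Λ → Prop) [DecidablePred p]
    -- the two block restrictions, as matrices on the subtypes
    (T₁ : Matrix {m : Λ // p m} {m : Λ // p m} ℂ)
    (T₂ : Matrix {m : Λ // ¬ p m} {m : Λ // ¬ p m} ℂ)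
    -- zero-extensions to matrices on Λ of the restrictions and of their inverses
    (R₁ R₂ E₁ E₂ : Matrix Λ Λ ℂ)
    (hR₁ : R₁ = fun m m' => if h : p m then (if h' : p m' then T₁ ⟨m, h⟩ ⟨m', h'⟩ else 0) else 0)
    (hR₂ : R₂ = fun m m' => if h : ¬ p m then (if h' : ¬ p m' then T₂ ⟨m, h⟩ ⟨m', h'⟩ else 0) else 0)
    (hE₁ : E₁ = fun m m' => if h : p m then (if h' : p m' then T₁⁻¹ ⟨m, h⟩ ⟨m', h'⟩ else 0) else 0)
    (hE₂ : E₂ = fun m m' => if h : ¬ p m then (if h' : ¬ p m' then T₂⁻¹ ⟨m, h⟩ ⟨m', h'⟩ else 0) else 0)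
    (hT : IsUnit T.det) (h₁ : IsUnit T₁.det) (h₂ : IsUnit T₂.det) :
    T⁻¹ = (E₁ + E₂) - (E₁ + E₂) * (T - R₁ - R₂) * T⁻¹ := by
  have hER : (E₁ + E₂) * (R₁ + R₂) = 1 := by
    subst hR₁ hR₂ hE₁ hE₂
    exact extendByZero_inv_add_extendByZero_not_inv_mul p T₁ T₂ h₁ h₂
  rw [sub_sub]
  exact eq_sub_mul_sub_mul_of_mul_eq_one hER (mul_nonsing_inv T hT)

/-- Resolvent identity: for a finite index set `Λ` partitioned by a predicate `p`
into blocks `Λ₁` and `Λ₂`, if `T`, `T_{Λ₁}` and `T_{Λ₂}` are invertible, then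
`T⁻¹ = (T_{Λ₁}⁻¹ + T_{Λ₂}⁻¹) − (T_{Λ₁}⁻¹ + T_{Λ₂}⁻¹)(T − T_{Λ₁} − T_{Λ₂}) T⁻¹`,
where restricted matrices and their inverses are extended by zero off their blocks. -/
theorem resolvent_identity {Λ : Type*} [Fintype Λ] [DecidableEq Λ]
    (T : Matrix Λ Λ ℂ) (p : Λ → Prop) [DecidablePred p]
    -- the two block restrictions, as matrices on the subtypes
    (T₁ : Matrix {m : Λ // p m} {m : Λ // p m} ℂ)
    (T₂ : Matrix {m : Λ // ¬ p m} {m : Λ // ¬ p m} ℂ)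
    (hT₁ : T₁ = T.submatrix Subtype.val Subtype.val)
    (hT₂ : T₂ = T.submatrix Subtype.val Subtype.val)
    -- zero-extensions to matrices on Λ of the restrictions and of their inverses
    (R₁ R₂ E₁ E₂ : Matrix Λ Λ ℂ)
    (hR₁ : R₁ = fun m m' => if h : p m then (if h' : p m' then T₁ ⟨m, h⟩ ⟨m', h'⟩ else 0) else 0)
    (hR₂ : R₂ = fun m m' => if h : ¬ p m then (if h' : ¬ p m' then T₂ ⟨m, h⟩ ⟨m', h'⟩ else 0) else 0)
    (hE₁ : E₁ = fun m m' => if h : p m then (if h' : p m' then T₁⁻¹ ⟨m, h⟩ ⟨m', h'⟩ else 0) else 0)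
    (hE₂ : E₂ = fun m m' => if h : ¬ p m then (if h' : ¬ p m' then T₂⁻¹ ⟨m, h⟩ ⟨m', h'⟩ else 0) else 0)
    (hT : IsUnit T.det) (h₁ : IsUnit T₁.det) (h₂ : IsUnit T₂.det) :
    T⁻¹ = (E₁ + E₂) - (E₁ + E₂) * (T - R₁ - R₂) * T⁻¹ :=
  resolvent_identity_general T p T₁ T₂ R₁ R₂ E₁ E₂ hR₁ hR₂ hE₁ hE₂ hT h₁ h₂
end

section
/- Fix distinct positive reals λ₁ < λ₂ < ⋯ < λ_n, a frequency ω ∈ ℝ^d satisfying the Melnikov condition |⟨k,ω⟩ + μ'λ_{j'} − μλ_j| ≥ γ/|k|^{10d} for all nonzero k ∈ ℤ^d with |k| ≤ 10 N₀ and all μ, μ' ∈ {−1, 1}, 1 ≤ j, j' ≤ n, and a real σ. Suppose 0 < ε₁ < (1/100) min{1, λ_j, |λ_j − λ_{j'}| : j ≠ j'} and 10 ε₁ < γ/(10 N₀)^{10d}. Then the set Ω₂ = { (μ, j, k) : μ ∈ {−1,1}, 1 ≤ j ≤ n, k ∈ Λ₀, |σ + ⟨k,ω⟩ + μλ_j|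 < ε₁ } has at most one element, where Λ₀ ⊂ ℤ^d is any set of diameter at most 10 N₀. -/
/-!
Two singular sites `(μ, j, k)` and `(μ', j', k')` give, by the triangle inequality,
`|⟨k - k', ω⟩ + μ λ_j - μ' λ_{j'}| < 2 ε₁`. If `k ≠ k'`, then `0 < |k - k'| ≤ 10 N₀`, and the
Melnikov condition bounds the left side below by `γ / (10 N₀)^{10d} > 10 ε₁`. Hence `k = k'`, and
`|μ λ_j - μ' λ_{j'}| < 2 ε₁` forces `μ = μ'` (otherwise it equals `λ_j + λ_{j'}`) and then `j = j'`
(the `λ_j` are `100 ε₁`-separated).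
-/

/-- The pairing `⟨k, ω⟩` between a lattice point and a real vector. -/
def zdot {d : ℕ} (k : Fin d → ℤ) (ω : Fin d → ℝ) : ℝ := ∑ i, (k i : ℝ) * ω i

@[simp]
lemma zdot_zero {d : ℕ} (ω : Fin d → ℝ) : zdot 0 ω = 0 := by
  simp [zdot]

lemma zdot_sub {d : ℕ} (k k' : Fin d → ℤ) (ω : Fin d → ℝ) :
    zdot (k - k') ω = zdot k ω - zdot k' ω := by
  simp [zdot, ← Finset.sum_sub_distrib, sub_mul]

lemma abs_zdot_sub_add_sub_lt {d : ℕ} {k k' : Fin d → ℤ} {ω : Fin d → ℝ} {σ a a' ε : ℝ}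
    (hk : |σ + zdot k ω + a| < ε) (hk' : |σ + zdot k' ω + a'| < ε) :
    |zdot (k - k') ω + a - a'| < 2 * ε :=
  calc |zdot (k - k') ω + a - a'| = |(σ + zdot k ω + a) - (σ + zdot k' ω + a')| := by
        rw [zdot_sub]; ring_nf
    _ ≤ |σ + zdot k ω + a| + |σ + zdot k' ω + a'| := abs_sub _ _
    _ < 2 * ε := by linarith

lemma eq_and_eq_of_abs_mul_sub_mul_lt {ι : Type*} {lam : ι → ℝ} {δ : ℝ}
    (hlam : ∀ j, δ < lam j) (hsep : ∀ j j', j ≠ j' → δ < |lam j - lam j'|)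
    {μ μ' : ℝ} (hμ : μ = 1 ∨ μ = -1) (hμ' : μ' = 1 ∨ μ' = -1) {j j' : ι}
    (h : |μ * lam j - μ' * lam j'| < δ) : μ = μ' ∧ j = j' := by
  have hδ : 0 < δ := (abs_nonneg _).trans_lt h
  have hj := hlam j
  have hj' := hlam j'
  have eq_of_abs_sub_lt (h : |lam j - lam j'| < δ) : j = j' := by
    by_contra hne
    exact (hsep j j' hne).not_gt h
  rcases hμ with rfl | rfl <;> rcases hμ' with rfl | rfl
  · exact ⟨rfl, eq_of_abs_sub_lt (by simpa using h)⟩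
  · rw [abs_of_pos (by linarith)] at h
    linarith
  · rw [abs_of_neg (by linarith)] at h
    linarith
  · refine ⟨rfl, eq_of_abs_sub_lt ?_⟩
    rwa [← abs_neg, show -(-1 * lam j - -1 * lam j') = lam j - lam j' by ring] at h

theorem singular_sites_subsingleton_general {d n : ℕ} (lam : Fin n → ℝ)
    (ω : Fin d → ℝ) (σ γ : ℝ) (hγ : 0 < γ) (N₀ : ℕ)
    (ε₁ : ℝ) (hε₁pos : 0 < ε₁)
    (Λ₀ : Set (Fin d → ℤ))
    (hdiam : ∀ k ∈ Λ₀, ∀ k' ∈ Λ₀, ‖k - k'‖ ≤ 10 * N₀)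
    (hMel : ∀ k : Fin d → ℤ, k ≠ 0 → ‖k‖ ≤ 10 * N₀ →
      ∀ μ μ' : ℝ, (μ = 1 ∨ μ = -1) → (μ' = 1 ∨ μ' = -1) → ∀ j j' : Fin n,
        γ / ‖k‖ ^ (10 * d) ≤ |zdot k ω + μ' * lam j' - μ * lam j|)
    (hε₁b : ∀ j, ε₁ < lam j / 100)
    (hε₁c : ∀ j j', j ≠ j' → ε₁ < |lam j - lam j'| / 100)
    (hε₁d : 10 * ε₁ < γ / (10 * (N₀ : ℝ)) ^ (10 * d)) :
    Set.Subsingleton {t : ℝ × Fin n × (Fin d → ℤ) |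
      (t.1 = 1 ∨ t.1 = -1) ∧ t.2.2 ∈ Λ₀ ∧
        |σ + zdot t.2.2 ω + t.1 * lam t.2.1| < ε₁} := by
  rintro ⟨μ, j, k⟩ ⟨hμ, hk, hsmall⟩ ⟨μ', j', k'⟩ ⟨hμ', hk', hsmall'⟩
  have hclose := abs_zdot_sub_add_sub_lt hsmall hsmall'
  obtain rfl : k = k' := by
    by_contra hne
    have hK : k - k' ≠ 0 := sub_ne_zero.mpr hne
    have hKpos : 0 < ‖k - k'‖ := norm_pos_iff.mpr hK
    have hKle := hdiam k hk k' hk'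
    have := calc 10 * ε₁ < γ / (10 * (N₀ : ℝ)) ^ (10 * d) := hε₁d
      _ ≤ γ / ‖k - k'‖ ^ (10 * d) := by gcongr
      _ ≤ |zdot (k - k') ω + μ * lam j - μ' * lam j'| := hMel _ hK hKle μ' μ hμ' hμ j' j
    linarith
  rw [sub_self, zdot_zero, zero_add] at hclose
  obtain ⟨rfl, rfl⟩ := eq_and_eq_of_abs_mul_sub_mul_lt (δ := 2 * ε₁)
    (fun j ↦ by linarith [hε₁b j]) (fun j j' hne ↦ by linarith [hε₁c j j' hne]) hμ hμ' hclose
  rfl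

/-- Under the Melnikov condition and the smallness conditions on `ε₁`, the set of
singular sites `(μ, j, k)` with `k` in a set `Λ₀` of diameter at most `10 N₀` has
at most one element. -/
theorem singular_sites_subsingleton {d n : ℕ} (lam : Fin n → ℝ)
    (hpos : ∀ j, 0 < lam j) (hmono : StrictMono lam)
    (ω : Fin d → ℝ) (σ γ : ℝ) (hγ : 0 < γ) (N₀ : ℕ) (hN₀ : 1 ≤ N₀)
    (ε₁ : ℝ) (hε₁pos : 0 < ε₁)
    (Λ₀ : Set (Fin d → ℤ))
    (hdiam : ∀ k ∈ Λ₀, ∀ k' ∈ Λ₀, ‖k - k'‖ ≤ 10 * N₀)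
    (hMel : ∀ k : Fin d → ℤ, k ≠ 0 → ‖k‖ ≤ 10 * N₀ →
      ∀ μ μ' : ℝ, (μ = 1 ∨ μ = -1) → (μ' = 1 ∨ μ' = -1) → ∀ j j' : Fin n,
        γ / ‖k‖ ^ (10 * d) ≤ |zdot k ω + μ' * lam j' - μ * lam j|)
    (hε₁a : ε₁ < 1 / 100)
    (hε₁b : ∀ j, ε₁ < lam j / 100)
    (hε₁c : ∀ j j', j ≠ j' → ε₁ < |lam j - lam j'| / 100)
    (hε₁d : 10 * ε₁ < γ / (10 * (N₀ : ℝ)) ^ (10 * d)) :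
    Set.Subsingleton {t : ℝ × Fin n × (Fin d → ℤ) |
      (t.1 = 1 ∨ t.1 = -1) ∧ t.2.2 ∈ Λ₀ ∧
        |σ + zdot t.2.2 ω + t.1 * lam t.2.1| < ε₁} :=
  singular_sites_subsingleton_general lam ω σ γ hγ N₀ ε₁ hε₁pos Λ₀ hdiam hMel hε₁b hε₁c hε₁d
end

section
/- In the setting of the Schur complement formula with A invertible, P, Q vectors with ‖P‖, ‖Q‖ ≤ 1, |ε| ≤ 1, and h = b − ε²Q A⁻¹ P ≠ 0, the operator norm of the inverse of the block matrix satisfies ‖T⁻¹‖ ≤ C (‖A⁻¹‖ + ‖A⁻¹‖² / |h| + ‖A⁻¹‖/|h| + 1/|h|) for an absolute constant C, and in particular if ‖A⁻¹‖ ≥ 1 then ‖T⁻¹‖ ≤ C(‖A⁻¹‖ + ‖A⁻¹‖²/|h|). -/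
/-!
The Schur complement of `A` in `T = (A, εP; εQ, b)` is the `1 × 1` matrix `(h)`, so the block
inversion formula gives
`T⁻¹ = (A⁻¹ + A⁻¹ B h⁻¹ C A⁻¹, -A⁻¹ B h⁻¹; -h⁻¹ C A⁻¹, h⁻¹)` with `B = εP`, `C = εQ` of operator
norm at most `1`. The operator norm of a block matrix is at most the sum of the norms of its
blocks, since each block enters through coordinate isometries; this bounds `‖T⁻¹‖` by
`‖A⁻¹‖ + ‖A⁻¹‖² / |h| + 2 ‖A⁻¹‖ / |h| + 1 / |h|`.
-/

open Matrix

/-- Operator norm of a matrix induced by the Euclidean norm. -/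
noncomputable def euclOpNorm {ι : Type} [Fintype ι] [DecidableEq ι]
    (M : Matrix ι ι ℂ) : ℝ :=
  ‖Matrix.toEuclideanCLM (𝕜 := ℂ) M‖

namespace Matrix

section Algebra

variable {α : Type*} {m n : Type*} [Fintype m] [Fintype n]

theorem replicateRow_mul_mul_replicateCol [NonUnitalSemiring α] {ι : Type*} (u : m → α) (M : Matrix m n α)
    (v : n → α) : replicateRow ι u * M * replicateCol ι v = of fun _ _ => u ⬝ᵥ M *ᵥ v := by
  rw [Matrix.mul_assoc, ← replicateCol_mulVec, replicateRow_mul_replicateCol]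

theorem inv_fromBlocks_of_isUnit₁₁ [CommRing α] [DecidableEq m] [DecidableEq n] {A : Matrix m m α}
    (B : Matrix m n α) (C : Matrix n m α) (D : Matrix n n α) (hA : IsUnit A)
    (hS : IsUnit (D - C * A⁻¹ * B)) :
    (fromBlocks A B C D)⁻¹ =
      fromBlocks (A⁻¹ + A⁻¹ * B * (D - C * A⁻¹ * B)⁻¹ * C * A⁻¹)
        (-(A⁻¹ * B * (D - C * A⁻¹ * B)⁻¹)) (-((D - C * A⁻¹ * B)⁻¹ * C * A⁻¹))
        (D - C * A⁻¹ * B)⁻¹ := by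
  let := hA.invertible
  let : Invertible (D - C * ⅟A * B) := by
    rw [invOf_eq_nonsing_inv]; exact hS.invertible
  let := fromBlocks₁₁Invertible A B C D
  simp only [← invOf_eq_nonsing_inv, invOf_fromBlocks₁₁_eq]

end Algebra

section L2OpNorm

open scoped Matrix.Norms.L2Operator

variable {𝕜 : Type*} [RCLike 𝕜] {ι m n l : Type*} [Fintype ι] [Fintype m] [Fintype n]
  [Fintype l]

lemma l2_opNorm_one_le [DecidableEq n] : ‖(1 : Matrix n n 𝕜)‖ ≤ 1 := by
  rw [cstar_norm_def, map_one]
  exact ContinuousLinearMap.norm_id_le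

lemma l2_opNorm_le_one_of_conjTranspose_mul_self_eq_one [DecidableEq n] {J : Matrix m n 𝕜}
    (hJ : Jᴴ * J = 1) : ‖J‖ ≤ 1 := by
  have hsq : ‖J‖ * ‖J‖ ≤ 1 := by
    rw [← l2_opNorm_conjTranspose_mul_self, hJ]; exact l2_opNorm_one_le
  nlinarith [norm_nonneg J]

lemma l2_opNorm_mul_le_of_le [DecidableEq n] [DecidableEq l] {A : Matrix m n 𝕜}
    {B : Matrix n l 𝕜} {a b : ℝ} (hA : ‖A‖ ≤ a) (hB : ‖B‖ ≤ b) : ‖A * B‖ ≤ a * b :=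
  (l2_opNorm_mul A B).trans <| mul_le_mul hA hB (norm_nonneg B) ((norm_nonneg A).trans hA)

lemma l2_opNorm_fromRows_le [DecidableEq n] (A : Matrix m n 𝕜) (B : Matrix l n 𝕜) :
    ‖fromRows A B‖ ≤ ‖A‖ + ‖B‖ := by
  classical
  have hsplit : fromRows A B =
      fromRows (1 : Matrix m m 𝕜) (0 : Matrix l m 𝕜) * A +
        fromRows (0 : Matrix m l 𝕜) (1 : Matrix l l 𝕜) * B := by
    rw [fromRows_mul, fromRows_mul]
    ext (i | i) j <;> simp
  have hinl : ‖fromRows (1 : Matrix m m 𝕜) (0 : Matrix l m 𝕜)‖ ≤ 1 :=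
    l2_opNorm_le_one_of_conjTranspose_mul_self_eq_one <| by
      simp [conjTranspose_fromRows_eq_fromCols_conjTranspose, fromCols_mul_fromRows]
  have hinr : ‖fromRows (0 : Matrix m l 𝕜) (1 : Matrix l l 𝕜)‖ ≤ 1 :=
    l2_opNorm_le_one_of_conjTranspose_mul_self_eq_one <| by
      simp [conjTranspose_fromRows_eq_fromCols_conjTranspose, fromCols_mul_fromRows]
  calc ‖fromRows A B‖ ≤ 1 * ‖A‖ + 1 * ‖B‖ := by
        rw [hsplit]
        exact (norm_add_le _ _).trans <|
          add_le_add (l2_opNorm_mul_le_of_le hinl le_rfl) (l2_opNorm_mul_le_of_le hinr le_rfl)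
    _ = ‖A‖ + ‖B‖ := by ring

lemma l2_opNorm_fromCols_le [DecidableEq m] [DecidableEq n] [DecidableEq l] (A : Matrix m n 𝕜)
    (B : Matrix m l 𝕜) : ‖fromCols A B‖ ≤ ‖A‖ + ‖B‖ := by
  rw [← l2_opNorm_conjTranspose, conjTranspose_fromCols_eq_fromRows_conjTranspose,
    ← l2_opNorm_conjTranspose A, ← l2_opNorm_conjTranspose B]
  exact l2_opNorm_fromRows_le _ _

lemma l2_opNorm_fromBlocks_le [DecidableEq ι] [DecidableEq m] [DecidableEq n] [DecidableEq l]
    (A : Matrix m n 𝕜) (B : Matrix m ι 𝕜) (C : Matrix l n 𝕜) (D : Matrix l ι 𝕜) :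
    ‖fromBlocks A B C D‖ ≤ ‖A‖ + ‖B‖ + ‖C‖ + ‖D‖ := by
  rw [← fromRows_fromCols_eq_fromBlocks]
  linarith [l2_opNorm_fromRows_le (fromCols A B) (fromCols C D), l2_opNorm_fromCols_le A B,
    l2_opNorm_fromCols_le C D]

lemma l2_opNorm_replicateCol [Unique ι] [DecidableEq ι] (v : m → 𝕜) :
    ‖replicateCol ι v‖ = ‖WithLp.toLp 2 v‖ := by
  have hdot : star v ⬝ᵥ v = ((‖WithLp.toLp 2 v‖ ^ 2 : ℝ) : 𝕜) := by
    rw [RCLike.ofReal_pow, ← inner_self_eq_norm_sq_to_K, EuclideanSpace.inner_eq_star_dotProduct,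
      dotProduct_comm]
  have hgram : (replicateCol ι v)ᴴ * replicateCol ι v =
      diagonal fun _ => ((‖WithLp.toLp 2 v‖ ^ 2 : ℝ) : 𝕜) := by
    ext i j
    rw [Subsingleton.elim i j]
    simp [hdot]
  have hsq := l2_opNorm_conjTranspose_mul_self (replicateCol ι v)
  rw [hgram, l2_opNorm_diagonal, pi_norm_const, RCLike.norm_ofReal, abs_sq] at hsq
  nlinarith [norm_nonneg (replicateCol ι v), norm_nonneg (WithLp.toLp 2 v)]

lemma l2_opNorm_replicateRow [Unique ι] [DecidableEq m] (v : m → 𝕜) :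
    ‖replicateRow ι v‖ = ‖WithLp.toLp 2 v‖ := by
  rw [← l2_opNorm_conjTranspose, conjTranspose_replicateRow, l2_opNorm_replicateCol]
  simp [EuclideanSpace.norm_eq]

theorem l2_opNorm_inv_fromBlocks_le [DecidableEq m] [DecidableEq n] {A : Matrix m m 𝕜}
    {B : Matrix m n 𝕜} {C : Matrix n m 𝕜} (D : Matrix n n 𝕜) (hA : IsUnit A)
    (hS : IsUnit (D - C * A⁻¹ * B)) (hB : ‖B‖ ≤ 1) (hC : ‖C‖ ≤ 1) :
    ‖(fromBlocks A B C D)⁻¹‖ ≤ ‖A⁻¹‖ + ‖A⁻¹‖ ^ 2 * ‖(D - C * A⁻¹ * B)⁻¹‖ +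
      2 * ‖A⁻¹‖ * ‖(D - C * A⁻¹ * B)⁻¹‖ + ‖(D - C * A⁻¹ * B)⁻¹‖ := by
  set a := ‖A⁻¹‖
  set s := ‖(D - C * A⁻¹ * B)⁻¹‖
  have ha : ‖A⁻¹‖ ≤ a := le_rfl
  have hs : ‖(D - C * A⁻¹ * B)⁻¹‖ ≤ s := le_rfl
  have h₁₁ : ‖A⁻¹ + A⁻¹ * B * (D - C * A⁻¹ * B)⁻¹ * C * A⁻¹‖ ≤ a + a * 1 * s * 1 * a :=
    (norm_add_le _ _).trans <| add_le_add ha <|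
      l2_opNorm_mul_le_of_le (l2_opNorm_mul_le_of_le (l2_opNorm_mul_le_of_le
        (l2_opNorm_mul_le_of_le ha hB) hs) hC) ha
  have h₁₂ : ‖-(A⁻¹ * B * (D - C * A⁻¹ * B)⁻¹)‖ ≤ a * 1 * s := by
    rw [norm_neg]; exact l2_opNorm_mul_le_of_le (l2_opNorm_mul_le_of_le ha hB) hs
  have h₂₁ : ‖-((D - C * A⁻¹ * B)⁻¹ * C * A⁻¹)‖ ≤ s * 1 * a := by
    rw [norm_neg]; exact l2_opNorm_mul_le_of_le (l2_opNorm_mul_le_of_le hs hC) ha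
  rw [inv_fromBlocks_of_isUnit₁₁ B C D hA hS]
  refine (l2_opNorm_fromBlocks_le _ _ _ _).trans ?_
  linarith

end L2OpNorm

end Matrix

open scoped Matrix.Norms.L2Operator

lemma euclOpNorm_eq_l2_opNorm {ι : Type} [Fintype ι] [DecidableEq ι] (M : Matrix ι ι ℂ) :
    euclOpNorm M = ‖M‖ := rfl

/-- Norm bound for the inverse of the block matrix `T = (A, εP; εQ, b)` with a
one-dimensional lower-right block, via the Schur complement `h = b − ε² Q A⁻¹ P`. -/
theorem schur_inverse_norm_bound :
    ∃ C : ℝ, 0 < C ∧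
      ∀ (n : ℕ) (A : Matrix (Fin n) (Fin n) ℂ) (P Q : Fin n → ℂ) (b ε : ℂ)
        (Pc : Matrix (Fin n) (Fin 1) ℂ) (Qr : Matrix (Fin 1) (Fin n) ℂ) (h : ℂ),
        IsUnit A.det →
        Pc = (fun i _ => P i) → Qr = (fun _ j => Q j) →
        ‖(WithLp.equiv 2 (Fin n → ℂ)).symm P‖ ≤ 1 →
        ‖(WithLp.equiv 2 (Fin n → ℂ)).symm Q‖ ≤ 1 →
        ‖ε‖ ≤ 1 →
        h = b - ε ^ 2 * (Q ⬝ᵥ A⁻¹.mulVec P) → h ≠ 0 →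
        euclOpNorm (Matrix.fromBlocks A (ε • Pc) (ε • Qr) (fun _ _ => b))⁻¹ ≤
            C * (euclOpNorm A⁻¹ + euclOpNorm A⁻¹ ^ 2 / ‖h‖ +
              euclOpNorm A⁻¹ / ‖h‖ + 1 / ‖h‖) ∧
          (1 ≤ euclOpNorm A⁻¹ →
            euclOpNorm (Matrix.fromBlocks A (ε • Pc) (ε • Qr) (fun _ _ => b))⁻¹ ≤
              C * (euclOpNorm A⁻¹ + euclOpNorm A⁻¹ ^ 2 / ‖h‖)) := by
  refine ⟨4, by norm_num, fun n A P Q b ε Pc Qr h hA hPc hQr hP hQ hε hh hne => ?_⟩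
  obtain rfl : Pc = replicateCol (Fin 1) P := hPc
  obtain rfl : Qr = replicateRow (Fin 1) Q := hQr
  have hcol : ‖ε • replicateCol (Fin 1) P‖ ≤ 1 := by
    grw [norm_smul_le, l2_opNorm_replicateCol, hε]
    simpa using hP
  have hrow : ‖ε • replicateRow (Fin 1) Q‖ ≤ 1 := by
    grw [norm_smul_le, l2_opNorm_replicateRow, hε]
    simpa using hQ
  set D : Matrix (Fin 1) (Fin 1) ℂ := fun _ _ => b
  have hS : D - ε • replicateRow (Fin 1) Q * A⁻¹ * ε • replicateCol (Fin 1) P =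
      diagonal fun _ => h := by
    rw [Matrix.smul_mul, Matrix.smul_mul, Matrix.mul_smul, smul_smul,
      replicateRow_mul_mul_replicateCol]
    ext i j
    rw [Subsingleton.elim i j, diagonal_apply_eq, hh, sq]
    rfl
  have hSinv : ‖(diagonal fun _ : Fin 1 => h)⁻¹‖ = ‖h‖⁻¹ := by
    rw [inv_eq_left_inv (B := diagonal fun _ => h⁻¹) (by simp [diagonal_mul_diagonal, hne]),
      l2_opNorm_diagonal, pi_norm_const, norm_inv]
  have hT := l2_opNorm_inv_fromBlocks_le D ((isUnit_iff_isUnit_det A).2 hA)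
    (hS ▸ isUnit_diagonal.2 (Pi.isUnit_iff.2 fun _ => hne.isUnit)) hcol hrow
  rw [hS, hSinv] at hT
  simp only [euclOpNorm_eq_l2_opNorm, div_eq_mul_inv, one_mul]
  set a := ‖A⁻¹‖
  set t := ‖h‖⁻¹
  have ha : 0 ≤ a := norm_nonneg _
  have ht : 0 ≤ t := inv_nonneg.2 (norm_nonneg h)
  have hat : 0 ≤ a * t := mul_nonneg ha ht
  have ha2t : 0 ≤ a ^ 2 * t := mul_nonneg (sq_nonneg a) ht
  refine ⟨by linarith, fun ha1 => ?_⟩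
  have hat_le : a * t ≤ a ^ 2 * t := mul_le_mul_of_nonneg_right (by nlinarith) ht
  have ht_le : t ≤ a ^ 2 * t := le_mul_of_one_le_left ht (one_le_pow₀ ha1)
  linarith
end
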